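/- arXiv:1607.07256 — 2 statements merged into one kernel-verified Lean document; each statement's English description precedes it below -/
import Mathlib

section
/- Let S be partitioned into sets S_i (i ∈ ℤ) of segments lying in horizontal unit strips, such that no unit square can cover segments from S_i and S_j whenever |i - j| ≥ 2. Let Q_i be a minimum cover of S_i by unit squares, Q_odd = ⋃_{i odd} Q_i, Q_even = ⋃_{i even} Q_i, and OPT a minimum cover of S. Then |Q_odd| ≤ |OPT|, |Q_even| ≤ |OPT|, and hence |Q_odd| + |Q_even| ≤ 2|OPT|. -/
/-- A unit square with lower-left corner `c` covers a segment `s` (a pair of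
endpoints) if it contains at least one endpoint of `s`. -/
def Covers (c : ℝ × ℝ) (s : (ℝ × ℝ) × (ℝ × ℝ)) : Prop :=
  s.1 ∈ Set.Icc c (c + (1, 1)) ∨ s.2 ∈ Set.Icc c (c + (1, 1))

/-!
An optimal cover `OPT` of all segments restricts, for each strip `i`, to the squares of `OPT`
that cover some segment of `S i`; this restriction still covers `S i`, so it has at least
`|Q i|` elements. For strips of one parity, indices differ by at least `2`, so these
restrictions are pairwise disjoint subsets of `OPT`, and summing gives `|Q_odd|, |Q_even| ≤ |OPT|`.
-/

section Cover

variable {ι α β : Type*} (R : α → β → Prop)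

def IsCover (T : Finset α) (S : Finset β) : Prop :=
  ∀ s ∈ S, ∃ c ∈ T, R c s

variable {R}

theorem IsCover.filter_covering {T : Finset α} {S : Finset β}
    [DecidablePred fun c => ∃ s ∈ S, R c s] (h : IsCover R T S) :
    IsCover R (T.filter fun c => ∃ s ∈ S, R c s) S := fun s hs =>
  let ⟨c, hc, hcs⟩ := h s hs
  ⟨c, Finset.mem_filter.2 ⟨hc, s, hs, hcs⟩, hcs⟩

theorem card_biUnion_le_of_isCover [DecidableEq α] {S : ι → Finset β} {Q : ι → Finset α}
    {J : Finset ι} {OPT : Finset α}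
    (hsep : ∀ i ∈ J, ∀ j ∈ J, i ≠ j → ∀ s ∈ S i, ∀ t ∈ S j, ∀ c, ¬ (R c s ∧ R c t))
    (hmin : ∀ i ∈ J, ∀ T, IsCover R T (S i) → (Q i).card ≤ T.card)
    (hOPT : ∀ i ∈ J, IsCover R OPT (S i)) :
    (J.biUnion Q).card ≤ OPT.card := by
  classical
  set O : ι → Finset α := fun i => OPT.filter fun c => ∃ s ∈ S i, R c s
  have hdisj : ∀ i ∈ J, ∀ j ∈ J, i ≠ j → Disjoint (O i) (O j) := by
    intro i hi j hj hij
    refine Finset.disjoint_filter.2 fun c _ ⟨s, hs, hcs⟩ ⟨t, ht, hct⟩ => ?_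
    exact hsep i hi j hj hij s hs t ht c ⟨hcs, hct⟩
  calc (J.biUnion Q).card ≤ ∑ i ∈ J, (Q i).card := Finset.card_biUnion_le
    _ ≤ ∑ i ∈ J, (O i).card :=
      Finset.sum_le_sum fun i hi => hmin i hi _ (hOPT i hi).filter_covering
    _ = (J.biUnion O).card := (Finset.card_biUnion hdisj).symm
    _ ≤ OPT.card :=
      Finset.card_le_card (Finset.biUnion_subset.2 fun i _ => Finset.filter_subset _ _)

end Cover

theorem Int.two_le_abs_sub_of_even_sub {i j : ℤ} (hij : i ≠ j) (h : Even (i - j)) :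
    2 ≤ |i - j| := by
  have := h.two_dvd
  have := sub_ne_zero.2 hij
  cases abs_cases (i - j) <;> omega

open scoped Classical in
theorem stmt_5_general (S : ℤ → Finset ((ℝ × ℝ) × (ℝ × ℝ))) (Q : ℤ → Finset (ℝ × ℝ))
    (I : Finset ℤ)
    (hcross : ∀ i j : ℤ, 2 ≤ |i - j| → ∀ s ∈ S i, ∀ t ∈ S j,
        ∀ c : ℝ × ℝ, ¬ (Covers c s ∧ Covers c t))
    (hQmin : ∀ i : ℤ, ∀ T : Finset (ℝ × ℝ),
        (∀ s ∈ S i, ∃ c ∈ T, Covers c s) → (Q i).card ≤ T.card)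
    (OPT : Finset (ℝ × ℝ))
    (hOPT : ∀ i : ℤ, ∀ s ∈ S i, ∃ c ∈ OPT, Covers c s) :
    ((I.filter (fun i => Odd i)).biUnion Q).card ≤ OPT.card ∧
    ((I.filter (fun i => Even i)).biUnion Q).card ≤ OPT.card ∧
    ((I.filter (fun i => Odd i)).biUnion Q).card +
      ((I.filter (fun i => Even i)).biUnion Q).card ≤ 2 * OPT.card := by
  have hparity : ∀ J : Finset ℤ, (∀ i ∈ J, ∀ j ∈ J, Even (i - j)) →
      (J.biUnion Q).card ≤ OPT.card := fun J hJ =>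
    card_biUnion_le_of_isCover
      (fun i hi j hj hij => hcross i j (Int.two_le_abs_sub_of_even_sub hij (hJ i hi j hj)))
      (fun i _ => hQmin i) (fun i _ => hOPT i)
  have hodd := hparity (I.filter fun i => Odd i) fun i hi j hj =>
    Odd.sub_odd (Finset.mem_filter.1 hi).2 (Finset.mem_filter.1 hj).2
  have heven := hparity (I.filter fun i => Even i) fun i hi j hj =>
    Even.sub (Finset.mem_filter.1 hi).2 (Finset.mem_filter.1 hj).2
  exact ⟨hodd, heven, by omega⟩

open scoped Classical in
/-- `S` is partitioned into strip classes `S i` (`i ∈ ℤ`, pairwise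
disjoint, nonempty only for indices in a finite set `I`) such that no unit square
covers segments from `S i` and `S j` when `|i - j| ≥ 2`; `Q i` is a minimum cover
of `S i`; `OPT` is a minimum cover of all of `S`.  Then
`|Q_odd| ≤ |OPT|`, `|Q_even| ≤ |OPT|` and `|Q_odd| + |Q_even| ≤ 2|OPT|`. -/
theorem stmt_5 (S : ℤ → Finset ((ℝ × ℝ) × (ℝ × ℝ))) (Q : ℤ → Finset (ℝ × ℝ))
    (I : Finset ℤ)
    (hdisj : ∀ i j : ℤ, i ≠ j → Disjoint (S i) (S j))
    (hcross : ∀ i j : ℤ, 2 ≤ |i - j| → ∀ s ∈ S i, ∀ t ∈ S j,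
        ∀ c : ℝ × ℝ, ¬ (Covers c s ∧ Covers c t))
    (hfin : ∀ i ∉ I, S i = ∅ ∧ Q i = ∅)
    (hQcov : ∀ i : ℤ, ∀ s ∈ S i, ∃ c ∈ Q i, Covers c s)
    (hQmin : ∀ i : ℤ, ∀ T : Finset (ℝ × ℝ),
        (∀ s ∈ S i, ∃ c ∈ T, Covers c s) → (Q i).card ≤ T.card)
    (OPT : Finset (ℝ × ℝ))
    (hOPT : ∀ i : ℤ, ∀ s ∈ S i, ∃ c ∈ OPT, Covers c s)
    (hOPTmin : ∀ T : Finset (ℝ × ℝ),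
        (∀ i : ℤ, ∀ s ∈ S i, ∃ c ∈ T, Covers c s) → OPT.card ≤ T.card) :
    ((I.filter (fun i => Odd i)).biUnion Q).card ≤ OPT.card ∧
    ((I.filter (fun i => Even i)).biUnion Q).card ≤ OPT.card ∧
    ((I.filter (fun i => Odd i)).biUnion Q).card +
      ((I.filter (fun i => Even i)).biUnion Q).card ≤ 2 * OPT.card :=
  stmt_5_general S Q I hcross hQmin OPT hOPT
end

section
/- Let P be a finite set of points in the closed upper half-plane and R a finite set of axis-parallel unit-width rectangles each of whose bottom edge lies on the x-axis (i.e., each rectangle is [a, a+1] × [0, h] for some a ∈ ℝ and h ≥ 0), such that every point of P is contained in some rectangle of R. Then the minimum number of rectangles in R needed to cover P is at most 2 times the optimal value of the LP relaxation of the natural covering integer program (min ∑_{r∈R} x_r subject to ∑_{r ∋ p} x_r ≥ 1 for all p ∈ P, 0 ≤ x_r). -/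
/-!
Let `p` be a highest point and `C` the rectangles containing `p`; feasibility at `p` gives
`∑_{r ∈ C} x r ≥ 1`. Since no point lies above `p`, the leftmost and the rightmost rectangle of
`C` together cover every point that some rectangle of `C` covers. Take these two rectangles and
delete the points they cover together with all of `C`: the restriction of `x` is still feasible
for the remaining instance, and we paid `2` integral rectangles for at least `1` unit of LP
weight. Induction on the number of points finishes the proof; the argument works verbatim for
any set system in which every instance has such a point `p`.
-/

open Finset

/-- A rectangle is encoded by `r = (a, h)` and is the set `[a, a+1] × [0, h]`. -/
def InRect (r : ℝ × ℝ) (p : ℝ × ℝ) : Prop :=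
  r.1 ≤ p.1 ∧ p.1 ≤ r.1 + 1 ∧ 0 ≤ p.2 ∧ p.2 ≤ r.2

section LocallyCoverable

variable {α ι : Type*}

/-- `p` can be peeled off at the price of the `k` sets of `S`: once the points covered by `S` are
removed, no remaining point needs a set through `p`. -/
def LocallyCoverable (mem : ι → α → Prop) (k : ℕ) : Prop :=
  ∀ P : Finset α, P.Nonempty → ∀ R : Finset ι, ∃ p ∈ P, ∃ S ⊆ R, #S ≤ k ∧
    ∀ q ∈ P, ∀ r ∈ R, mem r p → mem r q → ∃ s ∈ S, mem s q

variable {mem : ι → α → Prop} [DecidableRel mem] {k : ℕ}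

theorem LocallyCoverable.exists_cover_card_le (hk : LocallyCoverable mem k)
    (P : Finset α) (R : Finset ι) (x : ι → ℝ) (hx : ∀ r ∈ R, 0 ≤ x r)
    (hfeas : ∀ p ∈ P, 1 ≤ ∑ r ∈ R.filter (fun r => mem r p), x r) :
    ∃ T ⊆ R, (∀ p ∈ P, ∃ r ∈ T, mem r p) ∧ (#T : ℝ) ≤ k * ∑ r ∈ R, x r := by
  classical
  induction P using Finset.strongInduction generalizing R with
  | H P ih =>
  rcases P.eq_empty_or_nonempty with rfl | hne
  · exact ⟨∅, empty_subset _, by simp, by simpa using mul_nonneg k.cast_nonneg (sum_nonneg hx)⟩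
  obtain ⟨p, hp, S, hSR, hSk, hS⟩ := hk P hne R
  set C := R.filter (fun r => mem r p)
  set P' := P.filter (fun q => ¬ ∃ s ∈ S, mem s q)
  have hC : 1 ≤ ∑ r ∈ C, x r := hfeas p hp
  obtain ⟨r, hr⟩ : C.Nonempty := nonempty_of_sum_ne_zero (f := x) (by linarith)
  obtain ⟨hrR, hrp⟩ := mem_filter.1 hr
  have hP' : P' ⊂ P := filter_ssubset.2 ⟨p, hp, not_not_intro (hS p hp r hrR hrp hrp)⟩
  have hfeas' : ∀ q ∈ P', 1 ≤ ∑ r ∈ (R \ C).filter (fun r => mem r q), x r := by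
    intro q hq
    obtain ⟨hqP, hqS⟩ := mem_filter.1 hq
    convert hfeas q hqP using 2
    ext r
    simp only [C, mem_filter, mem_sdiff]
    exact ⟨fun h => ⟨h.1.1, h.2⟩, fun ⟨hrR, hrq⟩ =>
      ⟨⟨hrR, fun hrC => hqS (hS q hqP r hrR hrC.2 hrq)⟩, hrq⟩⟩
  obtain ⟨T, hTR, hTcov, hTcard⟩ :=
    ih P' hP' (R \ C) (fun r hr => hx r (mem_sdiff.1 hr).1) hfeas'
  refine ⟨S ∪ T, union_subset hSR (hTR.trans sdiff_subset), fun q hq => ?_, ?_⟩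
  · by_cases hqS : ∃ s ∈ S, mem s q
    · obtain ⟨s, hs, hsq⟩ := hqS
      exact ⟨s, mem_union_left _ hs, hsq⟩
    · obtain ⟨r, hr, hrq⟩ := hTcov q (mem_filter.2 ⟨hq, hqS⟩)
      exact ⟨r, mem_union_right _ hr, hrq⟩
  · calc (#(S ∪ T) : ℝ) ≤ k + #T := by exact_mod_cast (card_union_le S T).trans (by omega)
      _ ≤ k * ∑ r ∈ C, x r + k * ∑ r ∈ R \ C, x r :=
        add_le_add (le_mul_of_one_le_right k.cast_nonneg hC) hTcard
      _ = k * ∑ r ∈ R, x r := by rw [← mul_add, add_comm, sum_sdiff (filter_subset _ _)]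

end LocallyCoverable

theorem InRect.of_left {r s p q : ℝ × ℝ} (hs : InRect s p) (hr : InRect r q) (hsr : s.1 ≤ r.1)
    (hqp : q.1 ≤ p.1) (hq : q.2 ≤ p.2) : InRect s q := by
  obtain ⟨-, hs₂, -, hs₄⟩ := hs
  obtain ⟨hr₁, -, hr₃, -⟩ := hr
  exact ⟨by linarith, by linarith, hr₃, by linarith⟩

theorem InRect.of_right {r s p q : ℝ × ℝ} (hs : InRect s p) (hr : InRect r q) (hrs : r.1 ≤ s.1)
    (hpq : p.1 ≤ q.1) (hq : q.2 ≤ p.2) : InRect s q := by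
  obtain ⟨hs₁, -, -, hs₄⟩ := hs
  obtain ⟨-, hr₂, hr₃, -⟩ := hr
  exact ⟨by linarith, by linarith, hr₃, by linarith⟩

theorem locallyCoverable_inRect : LocallyCoverable InRect 2 := by
  classical
  intro P hne R
  obtain ⟨p, hp, hpmax⟩ := P.exists_max_image Prod.snd hne
  refine ⟨p, hp, ?_⟩
  set C := R.filter (fun r => InRect r p)
  rcases C.eq_empty_or_nonempty with hC | hC
  · exact ⟨∅, empty_subset _, by simp, fun q _ r hrR hrp _ =>
      (eq_empty_iff_forall_notMem.1 hC r (mem_filter.2 ⟨hrR, hrp⟩)).elim⟩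
  obtain ⟨rl, hrl, hrlmin⟩ := C.exists_min_image Prod.fst hC
  obtain ⟨rr, hrr, hrrmax⟩ := C.exists_max_image Prod.fst hC
  refine ⟨{rl, rr}, ?_, card_le_two, fun q hq r hrR hrp hrq => ?_⟩
  · simp only [insert_subset_iff, singleton_subset_iff]
    exact ⟨(mem_filter.1 hrl).1, (mem_filter.1 hrr).1⟩
  have hrC : r ∈ C := mem_filter.2 ⟨hrR, hrp⟩
  rcases le_total q.1 p.1 with h | h
  · exact ⟨rl, by simp, (mem_filter.1 hrl).2.of_left hrq (hrlmin r hrC) h (hpmax q hq)⟩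
  · exact ⟨rr, by simp, (mem_filter.1 hrr).2.of_right hrq (hrrmax r hrC) h (hpmax q hq)⟩

open scoped Classical in
theorem stmt_10_general (P R : Finset (ℝ × ℝ))
    (x : ℝ × ℝ → ℝ) (hx : ∀ r ∈ R, 0 ≤ x r)
    (hfeas : ∀ p ∈ P, 1 ≤ ∑ r ∈ R.filter (fun r => InRect r p), x r) :
    ∃ T ⊆ R, (∀ p ∈ P, ∃ r ∈ T, InRect r p) ∧ (T.card : ℝ) ≤ 2 * ∑ r ∈ R, x r := by
  exact_mod_cast locallyCoverable_inRect.exists_cover_card_le P R x hx hfeas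

open scoped Classical in
/-- for covering points in the upper half-plane by unit-width
rectangles abutting the x-axis, the integral optimum is at most twice the
LP-relaxation optimum: for every feasible fractional solution `x` there is an
integral cover `T ⊆ R` with `|T| ≤ 2 ∑ x`. -/
theorem stmt_10 (P R : Finset (ℝ × ℝ))
    (hP : ∀ p ∈ P, 0 ≤ p.2) (hR : ∀ r ∈ R, 0 ≤ r.2)
    (hcov : ∀ p ∈ P, ∃ r ∈ R, InRect r p)
    (x : ℝ × ℝ → ℝ) (hx : ∀ r ∈ R, 0 ≤ x r)
    (hfeas : ∀ p ∈ P, 1 ≤ ∑ r ∈ R.filter (fun r => InRect r p), x r) :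
    ∃ T ⊆ R, (∀ p ∈ P, ∃ r ∈ T, InRect r p) ∧ (T.card : ℝ) ≤ 2 * ∑ r ∈ R, x r :=
  stmt_10_general P R x hx hfeas
end
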